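/- arXiv:math/0403446 — 4 statements merged into one kernel-verified Lean document; each statement's English description precedes it below -/
import Mathlib

section
/- Let f be a continuous function on the unit circle bΔ, and suppose there exist complex polynomials P and Q and a continuous function g on bΔ with |g(z)| ≤ 1/2 for all z ∈ bΔ such that z·f(z) − 1 = z·P(z) + conj(z·Q(z)) + g(z) for all z ∈ bΔ. Then f − P − Q is nonvanishing on bΔ and the winding number of (f − P − Q) restricted to bΔ around 0 equals −1. -/
/-!
Writing `h = f - P - Q`, the hypothesis says `z h(z) = 1 + g(z) + (conj w - w)` with `w = z Q(z)`.
The last bracket is purely imaginary and `|g| ≤ 1/2`, so `Re (z h(z)) ≥ 1/2` on the circle.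
Hence `z h(z)` stays in the right half-plane, `arg (z h(z))` is a continuous argument of it, and
`arg (e^{iθ} h(e^{iθ})) - θ` is a continuous argument of `h` that decreases by `2π` over a turn.
-/

open Polynomial Metric
open scoped Classical

/-- `g` (restricted to the unit circle) has winding number `n` around `0`:
there is a continuous argument lift `α` along `θ ↦ g (exp (iθ))` whose total
increase over `[0, 2π]` is `2πn`. -/
def HasWindingNumber (g : ℂ → ℂ) (n : ℤ) : Prop :=
  ∃ α : ℝ → ℝ, Continuous α ∧
    (∀ θ : ℝ, g (Complex.exp (θ * Complex.I)) =
      (‖g (Complex.exp (θ * Complex.I))‖ : ℂ) * Complex.exp (α θ * Complex.I)) ∧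
    α (2 * Real.pi) - α 0 = n * (2 * Real.pi)

/-- `f` on the unit circle extends continuously to the closed unit disc,
holomorphically on the open unit disc. -/
def ExtendsHolo (f : ℂ → ℂ) : Prop :=
  ∃ F : ℂ → ℂ, ContinuousOn F (closedBall 0 1) ∧
    DifferentiableOn ℂ F (ball 0 1) ∧ ∀ z ∈ sphere (0:ℂ) 1, F z = f z

/-- Multiplicity of a zero of a (holomorphic) function: least `n` with
nonvanishing `n`-th derivative. -/
noncomputable def holoOrder (f : ℂ → ℂ) (z : ℂ) : ℕ :=
  sInf {n | iteratedDeriv n f z ≠ 0}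

open Complex ComplexConjugate

lemma half_le_re_mul_sub_sub {z f p q g : ℂ} (hg : ‖g‖ ≤ 1 / 2)
    (h : z * f - 1 = z * p + conj (z * q) + g) : 1 / 2 ≤ (z * (f - p - q)).re := by
  have hsplit : z * (f - p - q) = 1 + g + (conj (z * q) - z * q) := by linear_combination h
  rw [hsplit]
  simp only [add_re, sub_re, one_re, conj_re]
  linarith [neg_abs_le g.re, abs_re_le_norm g]

lemma exp_ofReal_mul_I_mem_sphere (θ : ℝ) : exp (θ * I) ∈ sphere (0 : ℂ) 1 := by
  simp [norm_exp_ofReal_mul_I]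

lemma hasWindingNumber_neg_of_pow_mul_mem_slitPlane {h : ℂ → ℂ} (n : ℕ)
    (hc : ContinuousOn h (sphere 0 1)) (hs : ∀ z ∈ sphere (0 : ℂ) 1, z ^ n * h z ∈ slitPlane) :
    HasWindingNumber h (-n) := by
  set e : ℝ → ℂ := fun θ => exp (θ * I) with he
  have he_cont : Continuous e := by fun_prop
  set W : ℝ → ℂ := fun θ => e θ ^ n * h (e θ) with hW
  have hW_cont : Continuous W :=
    (he_cont.pow n).mul (hc.comp_continuous he_cont exp_ofReal_mul_I_mem_sphere)
  refine ⟨fun θ => (W θ).arg - n * θ, ?_, fun θ => ?_, ?_⟩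
  · refine (continuous_iff_continuousAt.2 fun θ => ?_).sub (continuous_const.mul continuous_id)
    exact (continuousAt_arg (hs _ (exp_ofReal_mul_I_mem_sphere θ))).comp (f := W)
      hW_cont.continuousAt
  · have hpow : e θ ^ n = exp ((n * θ : ℝ) * I) := by
      rw [he, ← exp_nat_mul]; push_cast; ring_nf
    have hnorm : ‖W θ‖ = ‖h (e θ)‖ := by
      simp [hW, he, norm_exp_ofReal_mul_I]
    rw [← hnorm]
    refine mul_left_cancel₀ (pow_ne_zero n (exp_ne_zero (θ * I))) ?_
    calc e θ ^ n * h (e θ) = ‖W θ‖ * exp ((W θ).arg * I) := (norm_mul_exp_arg_mul_I _).symm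
      _ = e θ ^ n * (‖W θ‖ * exp (((W θ).arg - n * θ : ℝ) * I)) := by
        rw [hpow, mul_left_comm, ← exp_add]; push_cast; ring_nf
  · have hW_period : W (2 * Real.pi) = W 0 := by simp [hW, he]
    simp only [hW_period]
    push_cast
    ring

theorem stmt1_general (f g : ℂ → ℂ) (P Q : Polynomial ℂ)
    (hf : ContinuousOn f (sphere (0:ℂ) 1))
    (hgb : ∀ z ∈ sphere (0:ℂ) 1, ‖g z‖ ≤ 1/2)
    (heq : ∀ z ∈ sphere (0:ℂ) 1,
      z * f z - 1 = z * P.eval z + (starRingEnd ℂ) (z * Q.eval z) + g z) :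
    (∀ z ∈ sphere (0:ℂ) 1, f z - P.eval z - Q.eval z ≠ 0) ∧
      HasWindingNumber (fun z => f z - P.eval z - Q.eval z) (-1) := by
  have hslit : ∀ z ∈ sphere (0:ℂ) 1, z ^ 1 * (f z - P.eval z - Q.eval z) ∈ slitPlane := by
    intro z hz
    rw [pow_one]
    exact mem_slitPlane_iff.2 <| Or.inl <| by
      linarith [half_le_re_mul_sub_sub (hgb z hz) (heq z hz)]
  refine ⟨fun z hz => right_ne_zero_of_mul (slitPlane_ne_zero (hslit z hz)), ?_⟩
  have hc : ContinuousOn (fun z => f z - P.eval z - Q.eval z) (sphere 0 1) :=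
    (hf.sub P.continuous.continuousOn).sub Q.continuous.continuousOn
  simpa using hasWindingNumber_neg_of_pow_mul_mem_slitPlane 1 hc hslit

theorem stmt1 (f g : ℂ → ℂ) (P Q : Polynomial ℂ)
    (hf : ContinuousOn f (sphere (0:ℂ) 1)) (hg : ContinuousOn g (sphere (0:ℂ) 1))
    (hgb : ∀ z ∈ sphere (0:ℂ) 1, ‖g z‖ ≤ 1/2)
    (heq : ∀ z ∈ sphere (0:ℂ) 1,
      z * f z - 1 = z * P.eval z + (starRingEnd ℂ) (z * Q.eval z) + g z) :
    (∀ z ∈ sphere (0:ℂ) 1, f z - P.eval z - Q.eval z ≠ 0) ∧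
      HasWindingNumber (fun z => f z - P.eval z - Q.eval z) (-1) :=
  stmt1_general f g P Q hf hgb heq
end

section
/- Let f be a continuous function on the unit circle bΔ such that ∫_{bΔ} z^n f(z) dz = 0 for every nonnegative integer n. Then f extends continuously to the closed unit disc so as to be holomorphic on the open unit disc. -/
open Polynomial Metric
open scoped Classical

/-! Write `g θ = f (exp (θ * I))`. The hypothesis says exactly that the Fourier coefficients of `g`
of negative index vanish, so the Fejér means `σ_N g` (averages of `g` against the nonnegative
kernel `|D_N|² / N`, `D_N` the Dirichlet sum) are restrictions to the circle of polynomials `q_N`.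
By Fejér's theorem `σ_N g → g` uniformly; hence `(q_N)` is uniformly Cauchy on the circle, by the
maximum modulus principle also on the closed disc, and its uniform limit is the extension. -/

open Complex Filter Topology Finset
open scoped Real ComplexConjugate

noncomputable section

def fourierExp (k : ℤ) (θ : ℝ) : ℂ := exp (k * θ * I)

theorem continuous_fourierExp (k : ℤ) : Continuous (fourierExp k) := by
  unfold fourierExp; fun_prop

theorem fourierExp_mul_fourierExp (k l : ℤ) (θ : ℝ) :
    fourierExp k θ * fourierExp l θ = fourierExp (k + l) θ := by
  simp only [fourierExp, ← Complex.exp_add]; push_cast; ring_nf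

theorem fourierExp_sub (k : ℤ) (s t : ℝ) :
    fourierExp k (s - t) = fourierExp k s * fourierExp (-k) t := by
  simp only [fourierExp, ← Complex.exp_add]; push_cast; ring_nf

theorem conj_fourierExp (k : ℤ) (θ : ℝ) : conj (fourierExp k θ) = fourierExp (-k) θ := by
  simp only [fourierExp, ← Complex.exp_conj, map_mul, conj_I, conj_ofReal, map_intCast]
  push_cast; ring_nf

theorem norm_fourierExp (k : ℤ) (θ : ℝ) : ‖fourierExp k θ‖ = 1 := by
  rw [fourierExp, show (k : ℂ) * θ * I = ((k * θ : ℝ) : ℂ) * I by push_cast; ring,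
    norm_exp_ofReal_mul_I]

theorem fourierExp_natCast (n : ℕ) (θ : ℝ) : fourierExp n θ = exp (θ * I) ^ n := by
  rw [fourierExp, ← Complex.exp_nat_mul]; push_cast; ring_nf

theorem integral_fourierExp (k : ℤ) :
    ∫ θ in (0)..(2 * π), fourierExp k θ = if k = 0 then (2 * π : ℂ) else 0 := by
  split_ifs with hk
  · simp [hk, fourierExp]
  have hkI : (k : ℂ) * I ≠ 0 := mul_ne_zero (Int.cast_ne_zero.mpr hk) I_ne_zero
  simp_rw [fourierExp, mul_right_comm _ _ I]
  rw [integral_exp_mul_complex hkI]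
  have : exp (k * I * (2 * π)) = 1 := by
    rw [← exp_int_mul_two_pi_mul_I k]; ring_nf
  simp [this]

/-- The `k`-th Fourier coefficient of `h`, without the normalising factor `(2π)⁻¹`. -/
def circleCoeff (h : ℝ → ℂ) (k : ℤ) : ℂ := ∫ θ in (0)..(2 * π), h θ * fourierExp (-k) θ

theorem circleCoeff_fourierExp (m k : ℤ) :
    circleCoeff (fourierExp m) k = if k = m then (2 * π : ℂ) else 0 := by
  simp_rw [circleCoeff, fourierExp_mul_fourierExp, integral_fourierExp, add_neg_eq_zero, eq_comm]

def dirichletSum (N : ℕ) (s : ℝ) : ℂ := ∑ k ∈ range N, fourierExp k s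

def fejerKernel (N : ℕ) (s : ℝ) : ℝ := ‖dirichletSum N s‖ ^ 2 / N

theorem continuous_fejerKernel (N : ℕ) : Continuous (fejerKernel N) := by
  unfold fejerKernel dirichletSum
  have := continuous_fourierExp
  fun_prop

theorem fejerKernel_nonneg (N : ℕ) (s : ℝ) : 0 ≤ fejerKernel N s := by
  unfold fejerKernel; positivity

theorem ofReal_fejerKernel (N : ℕ) (s : ℝ) :
    (fejerKernel N s : ℂ) = (N : ℂ)⁻¹ * ∑ p ∈ range N ×ˢ range N, fourierExp (p.1 - p.2) s := by
  have hsq : ((‖dirichletSum N s‖ ^ 2 : ℝ) : ℂ) = dirichletSum N s * conj (dirichletSum N s) := by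
    rw [mul_conj, normSq_eq_norm_sq]
  rw [fejerKernel, ofReal_div, hsq, div_eq_inv_mul, ofReal_natCast, dirichletSum, map_sum,
    sum_mul_sum, sum_product]
  simp_rw [conj_fourierExp, fourierExp_mul_fourierExp, sub_eq_add_neg]

def fejerMean (h : ℝ → ℂ) (N : ℕ) (t : ℝ) : ℂ :=
  (2 * π : ℂ)⁻¹ * ∫ θ in (0)..(2 * π), (fejerKernel N (t - θ) : ℂ) * h θ

theorem intervalIntegrable_fejerKernel_mul {h : ℝ → ℂ} (hc : Continuous h) (N : ℕ) (t a b : ℝ) :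
    IntervalIntegrable (fun θ => (fejerKernel N (t - θ) : ℂ) * h θ) MeasureTheory.volume a b := by
  have := continuous_fejerKernel N
  exact Continuous.intervalIntegrable (by fun_prop) a b

theorem fejerMean_eq_sum {h : ℝ → ℂ} (hc : Continuous h) (N : ℕ) (t : ℝ) :
    fejerMean h N t = (2 * π * N : ℂ)⁻¹ *
      ∑ p ∈ range N ×ˢ range N, circleCoeff h (p.1 - p.2) * fourierExp (p.1 - p.2) t := by
  have hexpand : ∀ θ, (fejerKernel N (t - θ) : ℂ) * h θ = (N : ℂ)⁻¹ *
      ∑ p ∈ range N ×ˢ range N, fourierExp (p.1 - p.2) t * (h θ * fourierExp (-(p.1 - p.2)) θ) := by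
    intro θ
    rw [ofReal_fejerKernel, mul_assoc, sum_mul]
    congr 1
    refine sum_congr rfl fun p _ => ?_
    rw [fourierExp_sub]
    ring
  have hint : ∀ p ∈ range N ×ˢ range N, IntervalIntegrable
      (fun θ => fourierExp (p.1 - p.2) t * (h θ * fourierExp (-(p.1 - p.2)) θ))
      MeasureTheory.volume 0 (2 * π) := fun p _ =>
    (continuous_const.mul (hc.mul (continuous_fourierExp _))).intervalIntegrable _ _
  simp_rw [fejerMean, hexpand, intervalIntegral.integral_const_mul,
    intervalIntegral.integral_finsetSum hint, intervalIntegral.integral_const_mul, circleCoeff,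
    mul_inv, mul_comm (fourierExp _ t)]
  ring

theorem fejerMean_add {g h : ℝ → ℂ} (hg : Continuous g) (hh : Continuous h) (N : ℕ) (t : ℝ) :
    fejerMean (g + h) N t = fejerMean g N t + fejerMean h N t := by
  simp only [fejerMean, Pi.add_apply, mul_add]
  rw [intervalIntegral.integral_add (intervalIntegrable_fejerKernel_mul hg N t _ _)
    (intervalIntegrable_fejerKernel_mul hh N t _ _), mul_add]

theorem fejerMean_const_mul (a : ℂ) (h : ℝ → ℂ) (N : ℕ) (t : ℝ) :
    fejerMean (fun θ => a * h θ) N t = a * fejerMean h N t := by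
  simp only [fejerMean, mul_left_comm _ a, intervalIntegral.integral_const_mul]

theorem fejerMean_finsetSum {ι : Type*} (s : Finset ι) {h : ι → ℝ → ℂ}
    (hc : ∀ i ∈ s, Continuous (h i)) (N : ℕ) (t : ℝ) :
    fejerMean (fun θ => ∑ i ∈ s, h i θ) N t = ∑ i ∈ s, fejerMean (h i) N t := by
  simp only [fejerMean, mul_sum]
  rw [intervalIntegral.integral_finsetSum fun i hi =>
    intervalIntegrable_fejerKernel_mul (hc i hi) N t _ _, mul_sum]

def diffFiber (N : ℕ) (m : ℤ) : Finset (ℕ × ℕ) := {p ∈ range N ×ˢ range N | (p.1 : ℤ) - p.2 = m}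

theorem mem_diffFiber {N : ℕ} {m : ℤ} {p : ℕ × ℕ} :
    p ∈ diffFiber N m ↔ p.1 < N ∧ p.2 < N ∧ (p.1 : ℤ) - p.2 = m := by
  simp [diffFiber, and_assoc]

theorem le_natAbs_add_card_diffFiber (N : ℕ) (m : ℤ) : N ≤ m.natAbs + #(diffFiber N m) := by
  have hmaps : Set.MapsTo (fun i => (i + m.toNat, i + (-m).toNat))
      (range (N - m.natAbs) : Set ℕ) (diffFiber N m) := fun i hi => by
    simp only [coe_range, Set.mem_Iio, mem_coe, mem_diffFiber] at hi ⊢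
    omega
  have := card_le_card_of_injOn _ hmaps fun i _ j _ hij => by simpa using congrArg Prod.fst hij
  rw [card_range] at this
  omega

theorem card_diffFiber_le (N : ℕ) (m : ℤ) : #(diffFiber N m) ≤ N := by
  have hmaps : Set.MapsTo Prod.fst (diffFiber N m : Set (ℕ × ℕ)) (range N) :=
    fun p hp => by simp_all [mem_diffFiber]
  have := card_le_card_of_injOn _ hmaps fun p hp q hq hpq => by
    simp only [mem_coe, mem_diffFiber] at hp hq
    exact Prod.ext hpq (by omega)
  rwa [card_range] at this

theorem fejerMean_fourierExp (m : ℤ) (N : ℕ) (t : ℝ) :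
    fejerMean (fourierExp m) N t = (#(diffFiber N m) / N : ℂ) * fourierExp m t := by
  rw [fejerMean_eq_sum (continuous_fourierExp m)]
  simp_rw [circleCoeff_fourierExp, ite_mul, zero_mul, ← sum_filter]
  rw [sum_congr rfl fun p hp => by rw [(mem_filter.mp hp).2], sum_const, nsmul_eq_mul]
  rcases eq_or_ne N 0 with rfl | hN
  · simp
  rw [diffFiber]
  field_simp

theorem card_diffFiber_zero (N : ℕ) : #(diffFiber N 0) = N :=
  le_antisymm (card_diffFiber_le N 0) (by simpa using le_natAbs_add_card_diffFiber N 0)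

theorem fejerMean_one {N : ℕ} (hN : N ≠ 0) (t : ℝ) : fejerMean (fun _ => 1) N t = 1 := by
  have hone : fourierExp 0 = fun _ => 1 := funext fun θ => by simp [fourierExp]
  have := fejerMean_fourierExp 0 N t
  rw [hone, card_diffFiber_zero] at this
  rw [this, div_self (Nat.cast_ne_zero.mpr hN), one_mul]

theorem integral_fejerKernel {N : ℕ} (hN : N ≠ 0) (t : ℝ) :
    ∫ θ in (0)..(2 * π), fejerKernel N (t - θ) = 2 * π := by
  have h := fejerMean_one hN t
  simp only [fejerMean, mul_one, intervalIntegral.integral_ofReal] at h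
  exact_mod_cast (inv_mul_eq_one₀ (by simp [Real.pi_ne_zero])).mp h |>.symm

theorem norm_fejerMean_le {h : ℝ → ℂ} (hc : Continuous h) {M : ℝ} (hM : ∀ θ, ‖h θ‖ ≤ M)
    {N : ℕ} (hN : N ≠ 0) (t : ℝ) : ‖fejerMean h N t‖ ≤ M := by
  have hK := continuous_fejerKernel N
  have h2π : 0 ≤ 2 * π := by positivity
  have hpt : ∀ θ, ‖(fejerKernel N (t - θ) : ℂ) * h θ‖ ≤ fejerKernel N (t - θ) * M := fun θ => by
    rw [norm_mul, norm_real, Real.norm_of_nonneg (fejerKernel_nonneg _ _)]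
    exact mul_le_mul_of_nonneg_left (hM θ) (fejerKernel_nonneg _ _)
  calc ‖fejerMean h N t‖
      ≤ (2 * π)⁻¹ * ∫ θ in (0)..(2 * π), ‖(fejerKernel N (t - θ) : ℂ) * h θ‖ := by
        rw [fejerMean, norm_mul, norm_inv, norm_mul, Complex.norm_two, norm_real,
          Real.norm_of_nonneg Real.pi_pos.le]
        gcongr
        exact intervalIntegral.norm_integral_le_integral_norm h2π
    _ ≤ (2 * π)⁻¹ * ∫ θ in (0)..(2 * π), fejerKernel N (t - θ) * M := by
        gcongr
        exact intervalIntegral.integral_mono_on h2π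
          (Continuous.intervalIntegrable (by fun_prop) _ _)
          (Continuous.intervalIntegrable (by fun_prop) _ _) fun θ _ => hpt θ
    _ = M := by
        rw [intervalIntegral.integral_mul_const, integral_fejerKernel hN]
        field_simp

theorem norm_fejerMean_fourierExp_sub_le (m : ℤ) {N : ℕ} (hN : N ≠ 0) (t : ℝ) :
    ‖fejerMean (fourierExp m) N t - fourierExp m t‖ ≤ m.natAbs / N := by
  have hle : (#(diffFiber N m) : ℝ) ≤ N := by exact_mod_cast card_diffFiber_le N m
  have hge : (N : ℝ) ≤ m.natAbs + #(diffFiber N m) := by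
    exact_mod_cast le_natAbs_add_card_diffFiber N m
  have hN' : (0 : ℝ) < N := by positivity
  rw [fejerMean_fourierExp, ← sub_one_mul, norm_mul, norm_fourierExp, mul_one,
    show (#(diffFiber N m) / N : ℂ) - 1 = ((#(diffFiber N m) / N - 1 : ℝ) : ℂ) by push_cast; rfl,
    norm_real, Real.norm_eq_abs, abs_sub_comm,
    abs_of_nonneg (by rw [sub_nonneg, div_le_one hN']; exact hle),
    sub_le_iff_le_add, ← add_div, le_div_iff₀ hN', one_mul]
  exact hge

theorem exists_trigPoly_norm_sub_lt {g : ℝ → ℂ} (hg : Continuous g)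
    (hper : Function.Periodic g (2 * π)) {ε : ℝ} (hε : 0 < ε) :
    ∃ (s : Finset ℤ) (a : ℤ → ℂ), ∀ θ, ‖g θ - ∑ m ∈ s, a m * fourierExp m θ‖ < ε := by
  have : Fact (0 < 2 * π) := ⟨by positivity⟩
  let G : C(AddCircle (2 * π), ℂ) := ⟨hper.lift, continuous_coinduced_dom.mpr hg⟩
  have hG : G ∈ closure (Submodule.span ℂ (Set.range (fourier (T := 2 * π))) :
      Set C(AddCircle (2 * π), ℂ)) := by
    rw [← Submodule.topologicalClosure_coe, span_fourier_closure_eq_top]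
    trivial
  obtain ⟨P, hP, hGP⟩ := Metric.mem_closure_iff.mp hG ε hε
  obtain ⟨c, rfl⟩ := Finsupp.mem_span_range_iff_exists_finsupp.mp hP
  refine ⟨c.support, c, fun θ => ?_⟩
  have hPθ : (c.sum fun m a => a • fourier m) (θ : AddCircle (2 * π)) =
      ∑ m ∈ c.support, c m * fourierExp m θ := by
    simp only [Finsupp.sum, ContinuousMap.coe_sum, ContinuousMap.coe_smul, Finset.sum_apply,
      Pi.smul_apply, smul_eq_mul, fourier_coe_apply, fourierExp]
    refine sum_congr rfl fun m _ => ?_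
    congr 2
    push_cast
    field_simp
  calc ‖g θ - ∑ m ∈ c.support, c m * fourierExp m θ‖
      = dist (G θ) ((c.sum fun m a => a • fourier m) (θ : AddCircle (2 * π))) := by
        rw [dist_eq_norm, hPθ]; rfl
    _ ≤ dist G (c.sum fun m a => a • fourier m) := ContinuousMap.dist_apply_le_dist _
    _ < ε := hGP

/-- Approximate `g` by a trigonometric polynomial `P`: averaging against the Fejér kernel is a
contraction (the kernel is nonnegative of mass one) and moves `fourierExp m` by at most `|m| / N`.
-/
theorem tendstoUniformly_fejerMean {g : ℝ → ℂ} (hg : Continuous g)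
    (hper : Function.Periodic g (2 * π)) : TendstoUniformly (fejerMean g) g atTop := by
  rw [Metric.tendstoUniformly_iff]
  intro ε hε
  obtain ⟨s, a, hgP⟩ := exists_trigPoly_norm_sub_lt hg hper (by positivity : 0 < ε / 3)
  set P : ℝ → ℂ := fun θ => ∑ m ∈ s, a m * fourierExp m θ
  have hPc : Continuous P := by
    have := continuous_fourierExp
    fun_prop
  set C : ℝ := ∑ m ∈ s, ‖a m‖ * m.natAbs
  have hCN : ∀ᶠ N : ℕ in atTop, C / N < ε / 3 :=
    (tendsto_const_div_atTop_nhds_zero_nat C).eventually (gt_mem_nhds (by positivity))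
  filter_upwards [hCN, eventually_ne_atTop 0] with N hCN hN t
  have hsplit : fejerMean g N t = fejerMean (g - P) N t + fejerMean P N t := by
    rw [← fejerMean_add (hg.sub hPc) hPc, sub_add_cancel]
  have hfar : ‖fejerMean (g - P) N t‖ ≤ ε / 3 :=
    norm_fejerMean_le (hg.sub hPc) (fun θ => (hgP θ).le) hN t
  have hnear : ‖fejerMean P N t - P t‖ ≤ C / N := by
    have hterm : ∀ m ∈ s, ‖a m * fejerMean (fourierExp m) N t - a m * fourierExp m t‖ ≤
        ‖a m‖ * (m.natAbs / N) := fun m _ => by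
      rw [← mul_sub, norm_mul]
      gcongr
      exact norm_fejerMean_fourierExp_sub_le m hN t
    have hPmean : fejerMean P N t = ∑ m ∈ s, a m * fejerMean (fourierExp m) N t := by
      rw [fejerMean_finsetSum (h := fun m θ => a m * fourierExp m θ) s
        fun m _ => continuous_const.mul (continuous_fourierExp m)]
      simp_rw [fejerMean_const_mul]
    calc ‖fejerMean P N t - P t‖
        = ‖∑ m ∈ s, (a m * fejerMean (fourierExp m) N t - a m * fourierExp m t)‖ := by
          rw [sum_sub_distrib, hPmean]
      _ ≤ ∑ m ∈ s, ‖a m‖ * (m.natAbs / N) := (norm_sum_le _ _).trans (sum_le_sum hterm)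
      _ = C / N := by simp_rw [C, sum_div, mul_div_assoc]
  rw [dist_eq_norm']
  calc ‖fejerMean g N t - g t‖
      = ‖fejerMean (g - P) N t + (fejerMean P N t - P t) - (g t - P t)‖ := by rw [hsplit]; ring_nf
    _ ≤ ‖fejerMean (g - P) N t‖ + ‖fejerMean P N t - P t‖ + ‖g t - P t‖ :=
        norm_sub_le_of_le (norm_add_le _ _) le_rfl
    _ < ε := by linarith [hgP t]

theorem UniformCauchySeqOn.closedBall_of_sphere {E ι : Type*} [NormedAddCommGroup E]
    [NormedSpace ℂ E] {l : Filter ι} {q : ι → ℂ → E} (hq : ∀ i, Differentiable ℂ (q i))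
    {c : ℂ} {r : ℝ} (h : UniformCauchySeqOn q l (sphere c r)) :
    UniformCauchySeqOn q l (closedBall c r) := by
  rcases eq_or_ne r 0 with rfl | hr
  · simpa using h
  intro u hu
  obtain ⟨ε, hε, hεu⟩ := Metric.mem_uniformity_dist.mp hu
  filter_upwards [h _ (Metric.dist_mem_uniformity (half_pos hε))] with i hi z hz
  refine hεu ((dist_eq_norm _ _).trans_lt ((Complex.norm_le_of_forall_mem_frontier_norm_le
    isBounded_ball ((hq i.1).sub (hq i.2)).diffContOnCl (fun w hw => ?_)
    (by rwa [closure_ball c hr])).trans_lt (half_lt_self hε)))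
  rw [frontier_ball c hr] at hw
  rw [Pi.sub_apply, ← dist_eq_norm]
  exact (hi w hw).le

theorem extendsHolo_of_tendstoUniformlyOn_sphere {q : ℕ → ℂ → ℂ}
    (hq : ∀ n, Differentiable ℂ (q n)) {f : ℂ → ℂ}
    (hqf : TendstoUniformlyOn q f atTop (sphere 0 1)) : ExtendsHolo f := by
  have hcauchy := hqf.uniformCauchySeqOn.closedBall_of_sphere hq
  have hlim : ∀ z ∈ closedBall (0 : ℂ) 1,
      Tendsto (fun n => q n z) atTop (𝓝 (limUnder atTop fun n => q n z)) :=
    fun z hz => (hcauchy.cauchySeq hz).tendsto_limUnder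
  have hF := hcauchy.tendstoUniformlyOn_of_tendsto hlim
  refine ⟨fun z => limUnder atTop fun n => q n z,
    hF.continuousOn (Frequently.of_forall fun n => (hq n).continuous.continuousOn),
    (hF.mono ball_subset_closedBall).tendstoLocallyUniformlyOn.differentiableOn
      (Eventually.of_forall fun n => (hq n).differentiableOn) isOpen_ball,
    fun z hz => tendsto_nhds_unique (hlim z (sphere_subset_closedBall hz)) (hqf.tendsto_at hz)⟩

def fejerPoly (h : ℝ → ℂ) (N : ℕ) (w : ℂ) : ℂ :=
  (2 * π * N : ℂ)⁻¹ *
    ∑ p ∈ range N ×ˢ range N, circleCoeff h (p.1 - p.2) * w ^ (p.1 - p.2 : ℤ).toNat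

theorem differentiable_fejerPoly (h : ℝ → ℂ) (N : ℕ) : Differentiable ℂ (fejerPoly h N) := by
  unfold fejerPoly; fun_prop

theorem fejerPoly_exp_mul_I {h : ℝ → ℂ} (hc : Continuous h)
    (hneg : ∀ k < 0, circleCoeff h k = 0) (N : ℕ) (t : ℝ) :
    fejerPoly h N (exp (t * I)) = fejerMean h N t := by
  rw [fejerMean_eq_sum hc, fejerPoly]
  congr 1
  refine sum_congr rfl fun p _ => ?_
  rcases lt_or_ge ((p.1 : ℤ) - p.2) 0 with hk | hk
  · simp [hneg _ hk]
  · rw [← fourierExp_natCast, Int.toNat_of_nonneg hk]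

theorem circleIntegral_pow_mul_eq_circleCoeff (f : ℂ → ℂ) (n : ℕ) :
    (∮ z in C(0, 1), z ^ n * f z) = I * circleCoeff (fun θ => f (exp (θ * I))) (-(n + 1)) := by
  rw [circleIntegral, circleCoeff, ← intervalIntegral.integral_const_mul]
  refine intervalIntegral.integral_congr fun θ _ => ?_
  rw [deriv_circleMap, circleMap_zero, neg_neg, smul_eq_mul,
    show ((n : ℤ) + 1) = ((n + 1 : ℕ) : ℤ) by push_cast; rfl, fourierExp_natCast]
  push_cast
  ring_nf

end

theorem stmt9 (f : ℂ → ℂ) (hf : ContinuousOn f (sphere (0:ℂ) 1))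
    (h : ∀ n : ℕ, (∮ z in C(0, 1), z ^ n * f z) = 0) :
    ExtendsHolo f := by
  set g : ℝ → ℂ := fun θ => f (exp (θ * I))
  have hg : Continuous g := hf.comp_continuous (by fun_prop) fun θ => by simp
  have hper : Function.Periodic g (2 * π) := fun θ => by simp [g, add_mul, exp_add]
  have hneg : ∀ k < 0, circleCoeff g k = 0 := fun k hk => by
    obtain ⟨n, rfl⟩ : ∃ n : ℕ, k = -(n + 1) := ⟨(-k - 1).toNat, by omega⟩
    simpa [circleIntegral_pow_mul_eq_circleCoeff] using h n
  have hexp_arg : ∀ z ∈ sphere (0 : ℂ) 1, exp (arg z * I) = z := fun z hz => by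
    simpa [mem_sphere_zero_iff_norm.mp hz] using norm_mul_exp_arg_mul_I z
  refine extendsHolo_of_tendstoUniformlyOn_sphere (differentiable_fejerPoly g) ?_
  refine (((tendstoUniformly_fejerMean hg hper).comp arg).tendstoUniformlyOn.congr
    (Eventually.of_forall fun N z hz => ?_)).congr_right fun z hz => ?_
  · rw [Function.comp_apply, ← fejerPoly_exp_mul_I hg hneg, hexp_arg z hz]
  · simp [g, hexp_arg z hz]
end

section
/- Let f be a continuous function on the unit circle bΔ such that the Cauchy transform vanishes outside the closed unit disc: ∫_{bΔ} f(z)/(z − w) dz = 0 for all w ∈ ℂ with |w| > 1. Then f extends continuously to the closed unit disc so as to be holomorphic on the open unit disc. -/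
open Polynomial Metric
open scoped Classical

/-!
For `‖w‖ < 1` the Cauchy transform `F w = (2πi)⁻¹ ∮ f z / (z - w) dz` is holomorphic. Subtracting
the vanishing integral at the reflected point `(conj w)⁻¹`, which lies outside the closed disc,
turns the Cauchy kernel into the Poisson kernel: for `‖z‖ = 1`,
`z * ((z - w)⁻¹ - (z - (conj w)⁻¹)⁻¹) = (1 - ‖w‖²) / ‖z - w‖²`. So `F` is the Poisson integral
of `f`, and since the Poisson kernel is an approximate identity, `F w → f w₀` as `w → w₀` on the
circle. Hence `F` inside the disc and `f` on the circle glue to the required extension.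
-/

open Complex ComplexConjugate Real Filter Topology

theorem continuousOn_closedBall_piecewise {X Y : Type*} [PseudoMetricSpace X] [TopologicalSpace Y]
    {c : X} {R : ℝ} {G f : X → Y} (hG : ContinuousOn G (ball c R))
    (hf : ContinuousOn f (sphere c R))
    (hlim : ∀ w ∈ sphere c R, Tendsto G (𝓝[ball c R] w) (𝓝 (f w))) :
    ContinuousOn ((ball c R).piecewise G f) (closedBall c R) := by
  intro w hw
  rw [← ball_union_sphere] at hw ⊢
  rcases hw with hw | hw
  · refine ((hG.continuousAt (isOpen_ball.mem_nhds hw)).congr ?_).continuousWithinAt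
    filter_upwards [isOpen_ball.mem_nhds hw] with x hx using (Set.piecewise_eq_of_mem _ _ _ hx).symm
  · have hoff : ∀ x ∈ sphere c R, (ball c R).piecewise G f x = f x := fun x hx ↦
      Set.piecewise_eq_of_notMem _ _ _ (Set.disjoint_left.1 sphere_disjoint_ball hx)
    refine continuousWithinAt_union.2 ⟨?_, (hf w hw).congr hoff (hoff w hw)⟩
    rw [ContinuousWithinAt, hoff w hw]
    exact (hlim w hw).congr' (eventually_nhdsWithin_of_forall fun x hx ↦
      (Set.piecewise_eq_of_mem _ _ _ hx).symm)

section PoissonIntegral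

variable {E : Type*} [NormedAddCommGroup E] [NormedSpace ℝ E] {c w x z : ℂ} {R : ℝ}

theorem norm_circleAverage_le_circleAverage_norm (g : ℂ → E) (c : ℂ) (R : ℝ) :
    ‖circleAverage g c R‖ ≤ circleAverage (fun z ↦ ‖g z‖) c R := by
  rw [circleAverage_def, circleAverage_def, norm_smul, smul_eq_mul,
    Real.norm_of_nonneg (by positivity)]
  gcongr
  exact intervalIntegral.norm_integral_le_integral_norm two_pi_pos.le

theorem poissonKernel_nonneg (hz : z ∈ sphere c R) (hx : x ∈ ball c R) :
    0 ≤ poissonKernel c x z := by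
  rw [mem_sphere_iff_norm] at hz
  rw [mem_ball_iff_norm] at hx
  rw [poissonKernel_def, hz]
  have := norm_nonneg (x - c)
  apply div_nonneg <;> nlinarith

theorem poissonKernel_le_of_le_dist (hz : z ∈ sphere c R) (hx : x ∈ ball c R) {r : ℝ}
    (hr : 0 < r) (hzx : r ≤ dist z x) :
    poissonKernel c x z ≤ (R ^ 2 - ‖x - c‖ ^ 2) / r ^ 2 := by
  rw [mem_sphere_iff_norm] at hz
  rw [mem_ball_iff_norm] at hx
  rw [poissonKernel_def, hz, sub_sub_sub_cancel_right, ← dist_eq_norm z x]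
  have := norm_nonneg (x - c)
  gcongr
  nlinarith

theorem continuousOn_poissonKernel (hx : x ∈ ball c R) :
    ContinuousOn (poissonKernel c x) (sphere c |R|) := by
  rw [poissonKernel_eq_re_herglotzRieszKernel]
  exact continuous_re.comp_continuousOn (continuousOn_herglotzRieszKernel_sphere hx)

theorem circleAverage_poissonKernel (hx : x ∈ ball c R) :
    circleAverage (poissonKernel c x) c R = 1 := by
  have h := (diffContOnCl_const (c := (1 : ℂ))).circleAverage_poissonKernel_smul hx
  have e : poissonKernel c x • (fun _ ↦ (1 : ℂ)) = ofRealCLM ∘ poissonKernel c x := by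
    ext1 z; simp
  rw [e, ofRealCLM.circleAverage_comp_comm (continuousOn_poissonKernel hx).circleIntegrable'] at h
  exact_mod_cast (ofRealCLM_apply _ ▸ h)

theorem circleAverage_smul_const [CompleteSpace E] (g : ℂ → ℝ) (a : E) (c : ℂ) (R : ℝ) :
    circleAverage (fun z ↦ g z • a) c R = circleAverage g c R • a := by
  rw [circleAverage_def, circleAverage_def, intervalIntegral.integral_smul_const, smul_assoc]

theorem dist_circleAverage_poissonKernel_smul_le [CompleteSpace E] {f : ℂ → E}
    (hf : ContinuousOn f (sphere c R)) (hx : x ∈ ball c R) (a : E) {ε K : ℝ}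
    (hbound : ∀ z ∈ sphere c R, poissonKernel c x z * ‖f z - a‖ ≤ ε * poissonKernel c x z + K) :
    dist (circleAverage (poissonKernel c x • f) c R) a ≤ ε + K := by
  have hR : 0 < R := pos_of_mem_ball hx
  have hP := continuousOn_poissonKernel hx
  have hf' : ContinuousOn f (sphere c |R|) := by rwa [abs_of_pos hR]
  have hmass := circleAverage_poissonKernel hx
  have hsub : circleAverage (poissonKernel c x • f) c R - a =
      circleAverage (fun z ↦ poissonKernel c x z • (f z - a)) c R := by
    simp_rw [smul_sub]
    rw [circleAverage_fun_sub (f₁ := fun z ↦ poissonKernel c x z • f z)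
      (f₂ := fun z ↦ poissonKernel c x z • a) (hP.smul hf').circleIntegrable'
      (hP.smul continuousOn_const).circleIntegrable',
      circleAverage_smul_const, hmass, one_smul]
    rfl
  calc dist (circleAverage (poissonKernel c x • f) c R) a
      = ‖circleAverage (fun z ↦ poissonKernel c x z • (f z - a)) c R‖ := by
        rw [dist_eq_norm, hsub]
    _ ≤ circleAverage (fun z ↦ ‖poissonKernel c x z • (f z - a)‖) c R :=
        norm_circleAverage_le_circleAverage_norm _ _ _
    _ ≤ circleAverage (fun z ↦ ε * poissonKernel c x z + K) c R := by
        apply circleAverage_mono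
        · exact (hP.smul (hf'.sub continuousOn_const)).norm.circleIntegrable'
        · exact ((continuousOn_const.mul hP).add continuousOn_const).circleIntegrable'
        · intro z hz
          rw [abs_of_pos hR] at hz
          rw [norm_smul, Real.norm_of_nonneg (poissonKernel_nonneg hz hx)]
          exact hbound z hz
    _ = ε + K := by
        rw [circleAverage_fun_add (f₁ := fun z ↦ ε * poissonKernel c x z)
          (continuousOn_const.mul hP).circleIntegrable' continuousOn_const.circleIntegrable',
          circleAverage_const,
          show (fun z ↦ ε * poissonKernel c x z) = ε • poissonKernel c x from rfl,
          circleAverage_smul, hmass, smul_eq_mul, mul_one]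

theorem tendsto_circleAverage_poissonKernel_smul [CompleteSpace E] {f : ℂ → E}
    (hf : ContinuousOn f (sphere c R)) (hw : w ∈ sphere c R) :
    Tendsto (fun x ↦ circleAverage (poissonKernel c x • f) c R) (𝓝[ball c R] w) (𝓝 (f w)) := by
  obtain ⟨M, hM⟩ := (isCompact_sphere c R).exists_bound_of_continuousOn hf
  have hM0 : 0 ≤ M := (norm_nonneg _).trans (hM w hw)
  rw [Metric.tendsto_nhds]
  intro ε hε
  obtain ⟨δ, hδ, hfδ⟩ := Metric.continuousWithinAt_iff.1 (hf w hw) (ε / 2) (half_pos hε)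
  -- controls the contribution of the arc `δ ≤ dist z w`, and vanishes as `x` reaches the circle
  set K : ℂ → ℝ := fun x ↦ 2 * M * ((R ^ 2 - ‖x - c‖ ^ 2) / (δ / 2) ^ 2)
  have hK : Tendsto K (𝓝 w) (𝓝 0) := by
    have hKw : K w = 0 := by
      rw [mem_sphere_iff_norm] at hw
      simp [K, hw]
    rw [← hKw]
    exact (by fun_prop : Continuous K).tendsto w
  filter_upwards [self_mem_nhdsWithin, nhdsWithin_le_nhds (ball_mem_nhds w (half_pos hδ)),
    nhdsWithin_le_nhds (hK.eventually (gt_mem_nhds (half_pos hε)))] with x hx hxw hKx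
  refine (dist_circleAverage_poissonKernel_smul_le hf hx (f w) (ε := ε / 2) (K := K x) ?_).trans_lt
    (by linarith)
  intro z hz
  have hP := poissonKernel_nonneg hz hx
  have hK0 : 0 ≤ K x := by
    rw [mem_ball_iff_norm] at hx
    have := norm_nonneg (x - c)
    have : 0 ≤ R ^ 2 - ‖x - c‖ ^ 2 := by nlinarith
    positivity
  by_cases hzw : dist z w < δ
  · have hnear := (hfδ hz hzw).le
    rw [dist_eq_norm] at hnear
    nlinarith
  · have hfar : δ / 2 ≤ dist z x := by
      rw [mem_ball] at hxw
      linarith [dist_triangle z x w]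
    have hdiff : ‖f z - f w‖ ≤ 2 * M := by
      linarith [norm_sub_le (f z) (f w), hM z hz, hM w hw]
    calc poissonKernel c x z * ‖f z - f w‖
        ≤ (R ^ 2 - ‖x - c‖ ^ 2) / (δ / 2) ^ 2 * (2 * M) :=
          mul_le_mul (poissonKernel_le_of_le_dist hz hx (half_pos hδ) hfar) hdiff
            (norm_nonneg _) (hP.trans (poissonKernel_le_of_le_dist hz hx (half_pos hδ) hfar))
      _ = K x := by ring
      _ ≤ ε / 2 * poissonKernel c x z + K x := le_add_of_nonneg_left (by positivity)

end PoissonIntegral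

theorem poissonKernel_eq_sub_reflected_cauchyKernel {z w : ℂ} (hz : ‖z‖ = 1) (hw0 : w ≠ 0)
    (hw1 : ‖w‖ ≠ 1) :
    (poissonKernel 0 w z : ℂ) = z * ((z - w)⁻¹ - (z - (conj w)⁻¹)⁻¹) := by
  have hzw : z - w ≠ 0 := fun h ↦ hw1 (by rwa [← sub_eq_zero.1 h])
  have hzz : z * conj z = 1 := by rw [mul_conj', hz]; simp
  have hw' : conj w ≠ 0 := by simpa using hw0
  have hrefl : z - (conj w)⁻¹ = -(z * conj (z - w)) / conj w := by
    field_simp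
    rw [map_sub]
    linear_combination hzz
  have hczw : conj (z - w) ≠ 0 := (_root_.map_ne_zero _).2 hzw
  rw [hrefl, poissonKernel_def]
  simp only [sub_zero]
  push_cast
  rw [← mul_conj', ← mul_conj', ← mul_conj', hzz]
  have hz0 : z ≠ 0 := by rintro rfl; simp at hz
  field_simp
  rw [map_sub]
  linear_combination -hzz

theorem one_lt_norm_inv_conj {w : ℂ} (hw : ‖w‖ < 1) (hw0 : w ≠ 0) : 1 < ‖(conj w)⁻¹‖ := by
  rw [norm_inv, RCLike.norm_conj]
  exact (one_lt_inv₀ (norm_pos_iff.2 hw0)).2 hw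

section CauchyTransform

variable {E : Type*} [NormedAddCommGroup E] [NormedSpace ℂ E] {w : ℂ}

noncomputable def cauchyTransform (f : ℂ → E) (w : ℂ) : E :=
  (2 * π * I : ℂ)⁻¹ • ∮ z in C(0, 1), (z - w)⁻¹ • f z

theorem differentiableOn_cauchyTransform [CompleteSpace E] {f : ℂ → E}
    (hf : CircleIntegrable f 0 1) :
    DifferentiableOn ℂ (cauchyTransform f) (ball 0 1) := by
  have h :=
    (hasFPowerSeriesOn_cauchy_integral (R := 1) (by simpa using hf) one_pos).differentiableOn
  simp only [Metric.eball_coe, NNReal.coe_one] at h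
  exact h

theorem cauchyTransform_eq_circleAverage_poissonKernel_smul {f : ℂ → E}
    (hf : ContinuousOn f (sphere 0 1)) (hw : w ∈ ball 0 1) (hw0 : w ≠ 0)
    (hrefl : ∮ z in C(0, 1), (z - (conj w)⁻¹)⁻¹ • f z = 0) :
    cauchyTransform f w = circleAverage (poissonKernel 0 w • f) 0 1 := by
  rw [mem_ball_zero_iff] at hw
  have hw' := one_lt_norm_inv_conj hw hw0
  have hint : ∀ a : ℂ, ‖a‖ ≠ 1 → CircleIntegrable (fun z ↦ (z - a)⁻¹ • f z) 0 1 := by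
    intro a ha
    refine (((continuous_sub_right a).continuousOn.inv₀ fun z hz h ↦ ?_).smul hf).circleIntegrable
      zero_le_one
    rw [mem_sphere_zero_iff_norm] at hz
    exact ha (by rw [← sub_eq_zero.1 h]; exact hz)
  calc cauchyTransform f w
      = (2 * π * I : ℂ)⁻¹ • ∮ z in C(0, 1), ((z - w)⁻¹ - (z - (conj w)⁻¹)⁻¹) • f z := by
        simp_rw [sub_smul]
        rw [circleIntegral.integral_sub (hint _ hw.ne) (hint _ hw'.ne'), hrefl, sub_zero]
        rfl
    _ = circleAverage (fun z ↦ (z * ((z - w)⁻¹ - (z - (conj w)⁻¹)⁻¹)) • f z) 0 1 := by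
        rw [circleAverage_eq_circleIntegral one_ne_zero]
        congr 1
        refine circleIntegral.integral_congr zero_le_one fun z hz ↦ ?_
        have hz0 : z ≠ 0 := ne_of_mem_sphere hz one_ne_zero
        simp [smul_smul, hz0]
    _ = circleAverage (poissonKernel 0 w • f) 0 1 := by
        refine circleAverage_congr_sphere fun z hz ↦ ?_
        rw [abs_one, mem_sphere_zero_iff_norm] at hz
        rw [← poissonKernel_eq_sub_reflected_cauchyKernel hz hw0 hw.ne, Pi.smul_apply',
          Complex.coe_smul]

end CauchyTransform

theorem stmt10 (f : ℂ → ℂ) (hf : ContinuousOn f (sphere (0:ℂ) 1))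
    (h : ∀ w : ℂ, 1 < ‖w‖ → (∮ z in C(0, 1), f z / (z - w)) = 0) :
    ExtendsHolo f := by
  have hrefl (w : ℂ) (hw : w ∈ ball (0 : ℂ) 1) (hw0 : w ≠ 0) :
      ∮ z in C(0, 1), (z - (conj w)⁻¹)⁻¹ • f z = 0 := by
    simpa [div_eq_inv_mul] using h _ (one_lt_norm_inv_conj (mem_ball_zero_iff.1 hw) hw0)
  have hlim (w : ℂ) (hw : w ∈ sphere (0 : ℂ) 1) :
      Tendsto (cauchyTransform f) (𝓝[ball 0 1] w) (𝓝 (f w)) := by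
    refine (tendsto_circleAverage_poissonKernel_smul hf hw).congr' ?_
    filter_upwards [self_mem_nhdsWithin,
      nhdsWithin_le_nhds (eventually_ne_nhds (ne_of_mem_sphere hw one_ne_zero))] with x hx hx0
    exact (cauchyTransform_eq_circleAverage_poissonKernel_smul hf hx hx0 (hrefl x hx hx0)).symm
  have hG := differentiableOn_cauchyTransform (hf.circleIntegrable zero_le_one)
  refine ⟨(ball 0 1).piecewise (cauchyTransform f) f,
    continuousOn_closedBall_piecewise hG.continuousOn hf hlim,
    hG.congr fun z hz ↦ Set.piecewise_eq_of_mem _ _ _ hz, fun z hz ↦ ?_⟩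
  exact Set.piecewise_eq_of_notMem _ _ _ (Set.disjoint_left.1 sphere_disjoint_ball hz)
end

section
/- For every natural number n₀ there exists a continuous function f on the unit circle such that: (a) for every polynomial P of degree ≤ n₀ with f + P nonvanishing on the unit circle, the winding number of f + P around 0 is nonnegative; and (b) f does not extend continuously to the closed unit disc as a function holomorphic on the open unit disc. -/
open Polynomial Metric
open scoped Classical

/-! The witness is `f z = z ^ (n₀ + 1) + z̄ / 2`. On the unit circle `z̄ = 1 / z`, so `z (f + P)`
agrees there with the monic polynomial `r = X ^ (n₀ + 2) + X P + 1 / 2`. The winding number of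
`f + P` is therefore one less than the number of zeros of `r` in the disc, and there is at least
one such zero since their product has modulus `|r(0)| = 1 / 2`. If `F` extended `f`, the
holomorphic function `z (F z - z ^ (n₀ + 1))` would equal `1 / 2` on the circle, hence on the
disc, which fails at `z = 0`. -/

open Complex ComplexConjugate Set

def IsArgLift (γ : ℝ → ℂ) (α : ℝ → ℝ) : Prop :=
  Continuous α ∧ ∀ θ, γ θ = ‖γ θ‖ * exp (α θ * I)

namespace IsArgLift

variable {γ γ' : ℝ → ℂ} {α β : ℝ → ℝ}

theorem congr (hα : IsArgLift γ α) (h : ∀ θ, γ θ = γ' θ) : IsArgLift γ' α :=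
  ⟨hα.1, fun θ => by rw [← h θ]; exact hα.2 θ⟩

theorem mul (hα : IsArgLift γ α) (hβ : IsArgLift γ' β) :
    IsArgLift (fun θ => γ θ * γ' θ) (α + β) := by
  refine ⟨hα.1.add hβ.1, fun θ => ?_⟩
  simp only [Pi.add_apply, norm_mul, ofReal_add, add_mul, exp_add, ofReal_mul]
  conv_lhs => rw [hα.2 θ, hβ.2 θ]
  ring

theorem exp_mul_I : IsArgLift (fun θ => exp (θ * I)) id :=
  ⟨continuous_id, fun θ => by simp [norm_exp_ofReal_mul_I]⟩

theorem const (c : ℂ) : IsArgLift (fun _ => c) (fun _ => arg c) :=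
  ⟨continuous_const, fun _ => (norm_mul_exp_arg_mul_I c).symm⟩

theorem arg_of_re_pos (hγ : Continuous γ) (hre : ∀ θ, 0 < (γ θ).re) :
    IsArgLift γ (fun θ => arg (γ θ)) :=
  ⟨continuous_iff_continuousAt.2 fun θ =>
      (continuousAt_arg (Or.inl (hre θ))).comp hγ.continuousAt,
    fun _ => (norm_mul_exp_arg_mul_I _).symm⟩

/-- Two lifts differ by a continuous function with values in `2πℤ`, hence by a constant. -/
theorem sub_eq_sub (hγ : ∀ θ, γ θ ≠ 0) (hα : IsArgLift γ α) (hβ : IsArgLift γ β) (s t : ℝ) :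
    α t - α s = β t - β s := by
  have hdiscrete : IsDiscrete (AddSubgroup.zmultiples (2 * Real.pi) : Set ℝ) :=
    isDiscrete_iff_discreteTopology.mpr
      (inferInstanceAs (DiscreteTopology (AddSubgroup.zmultiples (2 * Real.pi))))
  have hmaps : MapsTo (α - β) univ (AddSubgroup.zmultiples (2 * Real.pi)) := by
    intro θ _
    have hexp : Circle.exp (α θ) = Circle.exp (β θ) := by
      ext
      simp only [Circle.coe_exp]
      exact mul_left_cancel₀ (by simpa using hγ θ) ((hα.2 θ).symm.trans (hβ.2 θ))
    obtain ⟨m, hm⟩ := Circle.exp_eq_exp.mp hexp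
    exact ⟨m, by simp [hm]⟩
  have := isPreconnected_univ.constant_of_mapsTo hdiscrete (hα.1.sub hβ.1).continuousOn hmaps
    (mem_univ t) (mem_univ s)
  simp only [Pi.sub_apply] at this
  linarith

end IsArgLift

theorem exp_ofReal_two_pi_mul_I : exp ((2 * Real.pi : ℝ) * I) = 1 := by
  push_cast; exact exp_two_pi_mul_I

/-- Write `e^{iθ} - a` as `e^{iθ} (1 - a e^{-iθ})` when `‖a‖ < 1` and as `-a (1 - a⁻¹ e^{iθ})`
when `‖a‖ > 1`: the second factor stays in the right half-plane, so its principal argument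
is a lift that returns to its initial value. -/
theorem exists_isArgLift_exp_mul_I_sub {a : ℂ} (ha : ‖a‖ ≠ 1) :
    ∃ α, IsArgLift (fun θ => exp (θ * I) - a) α ∧
      α (2 * Real.pi) - α 0 = if ‖a‖ < 1 then 2 * Real.pi else 0 := by
  have re_pos : ∀ w : ℂ, ‖w‖ < 1 → 0 < (1 - w).re := fun w hw => by
    simp only [sub_re, one_re, sub_pos]
    exact (re_le_norm w).trans_lt hw
  rcases ha.lt_or_gt with hlt | hgt
  · set v : ℝ → ℂ := fun θ => 1 - a * exp (-(θ * I))
    have hv : IsArgLift v (fun θ => arg (v θ)) :=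
      .arg_of_re_pos (by fun_prop) fun θ => re_pos _ <| by
        rwa [norm_mul, ← neg_mul, ← ofReal_neg, norm_exp_ofReal_mul_I, mul_one]
    refine ⟨_, IsArgLift.exp_mul_I.mul hv |>.congr fun θ => ?_, ?_⟩
    · simp only [v, mul_sub, mul_one, exp_neg]
      field_simp
    · simp only [Pi.add_apply, id_eq, v, if_pos hlt, exp_neg, exp_ofReal_two_pi_mul_I, ofReal_zero,
        zero_mul, exp_zero]
      ring
  · have ha0 : a ≠ 0 := norm_pos_iff.mp (one_pos.trans hgt)
    set v : ℝ → ℂ := fun θ => 1 - a⁻¹ * exp (θ * I)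
    have hv : IsArgLift v (fun θ => arg (v θ)) :=
      .arg_of_re_pos (by fun_prop) fun θ => re_pos _ <| by
        rwa [norm_mul, norm_exp_ofReal_mul_I, mul_one, norm_inv, inv_lt_one₀ (one_pos.trans hgt)]
    refine ⟨_, (IsArgLift.const (-a)).mul hv |>.congr fun θ => ?_, ?_⟩
    · simp only [v]
      field_simp
      ring
    · simp only [Pi.add_apply, v, if_neg hgt.not_gt, exp_ofReal_two_pi_mul_I, ofReal_zero,
        zero_mul, exp_zero]
      ring

theorem Multiset.exists_isArgLift_prod_exp_mul_I_sub {s : Multiset ℂ} (hs : ∀ a ∈ s, ‖a‖ ≠ 1) :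
    ∃ α, IsArgLift (fun θ => (s.map (exp (θ * I) - ·)).prod) α ∧
      α (2 * Real.pi) - α 0 = s.countP (‖·‖ < 1) * (2 * Real.pi) := by
  induction s using Multiset.induction_on with
  | empty => exact ⟨fun _ => 0, ⟨continuous_const, fun θ => by simp⟩, by simp⟩
  | cons a s ih =>
    obtain ⟨α, hα, hαinc⟩ := ih fun b hb => hs b (Multiset.mem_cons_of_mem hb)
    obtain ⟨β, hβ, hβinc⟩ := exists_isArgLift_exp_mul_I_sub (hs a (Multiset.mem_cons_self a s))
    refine ⟨β + α, hβ.mul hα |>.congr fun θ => by simp, ?_⟩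
    simp only [Pi.add_apply, Multiset.countP_cons]
    split_ifs at hβinc ⊢ <;> push_cast <;> linarith

theorem Polynomial.exists_isArgLift_eval_exp_mul_I {p : ℂ[X]} (hroots : ∀ a ∈ p.roots, ‖a‖ ≠ 1) :
    ∃ α, IsArgLift (fun θ => p.eval (exp (θ * I))) α ∧
      α (2 * Real.pi) - α 0 = p.roots.countP (‖·‖ < 1) * (2 * Real.pi) := by
  obtain ⟨α, hα, hαinc⟩ := Multiset.exists_isArgLift_prod_exp_mul_I_sub hroots
  refine ⟨_, (IsArgLift.const p.leadingCoeff).mul hα |>.congr fun θ => ?_, ?_⟩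
  · exact ((IsAlgClosed.splits p).eval_eq_prod_roots _).symm
  · simp only [Pi.add_apply]
    linarith

theorem Polynomial.Monic.exists_mem_roots_norm_lt_one {p : ℂ[X]} (hp : p.Monic)
    (h0 : ‖p.coeff 0‖ < 1) : ∃ a ∈ p.roots, ‖a‖ < 1 := by
  by_contra! h
  have : 1 ≤ ‖p.roots.prod‖ := Multiset.prod_induction (1 ≤ ‖·‖) _
    (fun a b ha hb => (norm_mul a b).symm ▸ one_le_mul_of_one_le_of_one_le ha hb)
    (by simp) h
  rw [(IsAlgClosed.splits p).coeff_zero_eq_prod_roots_of_monic hp, norm_mul, norm_pow, norm_neg,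
    norm_one, one_pow, one_mul] at h0
  linarith

theorem Polynomial.monic_X_pow_succ_add_X_mul_add_C {R : Type*} [Semiring R] {k : ℕ} {P : R[X]}
    (hP : P.natDegree < k) (c : R) : (X ^ (k + 1) + (X * P + C c)).Monic := by
  refine monic_X_pow_add ((degree_add_le _ _).trans_lt (max_lt ?_ ?_))
  · refine (degree_le_natDegree.trans ?_).trans_lt (WithBot.coe_lt_coe.2 (Nat.lt_succ_self k))
    have := natDegree_X_le (R := R)
    exact WithBot.coe_le_coe.2 (natDegree_mul_le.trans (by omega))
  · exact degree_C_le.trans_lt (WithBot.coe_lt_coe.2 k.succ_pos)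

theorem mul_conj_of_mem_sphere {z : ℂ} (hz : z ∈ sphere (0 : ℂ) 1) : z * conj z = 1 := by
  rw [mul_conj, normSq_eq_norm_sq, mem_sphere_zero_iff_norm.mp hz]
  norm_num

theorem not_extendsHolo_add_const_mul_conj {p : ℂ → ℂ} (hp : Differentiable ℂ p) {c : ℂ}
    (hc : c ≠ 0) : ¬ ExtendsHolo fun z => p z + c * conj z := by
  rintro ⟨F, hFc, hFd, hFf⟩
  have hG : DiffContOnCl ℂ (fun z => z * (F z - p z)) (ball 0 1) := by
    refine ⟨differentiableOn_id.mul (hFd.sub hp.differentiableOn), ?_⟩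
    rw [closure_ball 0 one_ne_zero]
    exact continuousOn_id.mul (hFc.sub hp.continuous.continuousOn)
  have hfrontier : EqOn (fun z => z * (F z - p z)) (fun _ => c) (frontier (ball 0 1)) := by
    intro z hz
    rw [frontier_ball 0 one_ne_zero] at hz
    simp only [hFf z hz, add_sub_cancel_left, mul_left_comm z c,
      mul_conj_of_mem_sphere hz, mul_one]
  have := eqOn_of_eqOn_frontier isBounded_ball hG diffContOnCl_const hfrontier
    (mem_ball_self one_pos)
  exact hc (by simpa using this.symm)

theorem winding_nonneg_pow_add_const_mul_conj_add_eval {k : ℕ} {c : ℂ} (hc : ‖c‖ < 1)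
    {P : ℂ[X]} (hP : P.natDegree < k)
    (hne : ∀ z ∈ sphere (0 : ℂ) 1, z ^ k + c * conj z + P.eval z ≠ 0) {m : ℤ}
    (hm : HasWindingNumber (fun z => z ^ k + c * conj z + P.eval z) m) : 0 ≤ m := by
  obtain ⟨α, hαc, hα, hαinc⟩ := hm
  set r : ℂ[X] := X ^ (k + 1) + (X * P + C c)
  have hr : ∀ z ∈ sphere (0 : ℂ) 1, r.eval z = z * (z ^ k + c * conj z + P.eval z) := by
    intro z hz
    simp only [r, eval_add, eval_pow, eval_mul, eval_X, eval_C]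
    linear_combination -c * mul_conj_of_mem_sphere hz
  have hexp_mem : ∀ θ : ℝ, exp (θ * I) ∈ sphere (0 : ℂ) 1 := fun θ => by
    simp [norm_exp_ofReal_mul_I]
  have hroots : ∀ a ∈ r.roots, ‖a‖ ≠ 1 := fun a ha h1 => by
    have hsphere : a ∈ sphere (0 : ℂ) 1 := mem_sphere_zero_iff_norm.mpr h1
    have := (mem_roots'.mp ha).2
    rw [IsRoot, hr a hsphere] at this
    exact hne a hsphere <|
      (mul_eq_zero.mp this).resolve_left (ne_zero_of_mem_sphere one_ne_zero ⟨a, hsphere⟩)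
  obtain ⟨β, hβ, hβinc⟩ := Polynomial.exists_isArgLift_eval_exp_mul_I hroots
  have hzero : 0 < r.roots.countP (‖·‖ < 1) := by
    refine Multiset.countP_pos.mpr ((monic_X_pow_succ_add_X_mul_add_C hP c).exists_mem_roots_norm_lt_one ?_)
    simpa [r] using hc
  have hlift : IsArgLift (fun θ => r.eval (exp (θ * I))) (id + α) :=
    IsArgLift.exp_mul_I.mul ⟨hαc, hα⟩ |>.congr fun θ => (hr _ (hexp_mem θ)).symm
  have hγ : ∀ θ : ℝ, r.eval (exp (θ * I)) ≠ 0 := fun θ => by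
    rw [hr _ (hexp_mem θ)]
    exact mul_ne_zero (exp_ne_zero _) (hne _ (hexp_mem θ))
  have hinc := hlift.sub_eq_sub hγ hβ 0 (2 * Real.pi)
  simp only [Pi.add_apply, id_eq, hβinc] at hinc
  have : (1 + m : ℝ) = r.roots.countP (‖·‖ < 1) := by nlinarith [Real.pi_pos]
  exact_mod_cast (by linarith [(Nat.one_le_cast (α := ℝ)).mpr hzero] : (0 : ℝ) ≤ m)

theorem stmt12 (n₀ : ℕ) :
    ∃ f : ℂ → ℂ, ContinuousOn f (sphere (0:ℂ) 1) ∧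
      (∀ P : Polynomial ℂ, P.natDegree ≤ n₀ →
        (∀ z ∈ sphere (0:ℂ) 1, f z + P.eval z ≠ 0) →
        ∀ m : ℤ, HasWindingNumber (fun z => f z + P.eval z) m → 0 ≤ m) ∧
      ¬ ExtendsHolo f := by
  refine ⟨fun z => z ^ (n₀ + 1) + 1 / 2 * conj z, by fun_prop, ?_, ?_⟩
  · intro P hP hne m hm
    exact winding_nonneg_pow_add_const_mul_conj_add_eval (by norm_num) (Nat.lt_succ_of_le hP) hne hm
  · exact not_extendsHolo_add_const_mul_conj (differentiable_pow _) (by norm_num)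
end
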